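/- arXiv:2303.10124 — 3 statements merged into one kernel-verified Lean document; each statement's English description precedes it below -/
import Mathlib

section
/- For all real h, the limit of Owen's T function as the second argument tends to +∞ satisfies lim_{a→∞} T(h, a) = (1 - Φ(|h|))/2, where Φ is the standard normal CDF. -/
open Real MeasureTheory Filter

/-- Owen's T function `T(h,a) = (1/(2π)) ∫₀^a exp(-h²(1+t²)/2)/(1+t²) dt`. -/
noncomputable def OwenT (h a : ℝ) : ℝ :=
  (1 / (2 * Real.pi)) * ∫ t in (0:ℝ)..a, Real.exp (-h^2 * (1 + t^2) / 2) / (1 + t^2)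

/-- Standard normal CDF. -/
noncomputable def Phi (x : ℝ) : ℝ :=
  ∫ t in Set.Iic x, (Real.sqrt (2 * Real.pi))⁻¹ * Real.exp (-t^2 / 2)

/-! For `c ≥ 0` and every `t`,
`e^{-c²(1+t²)/2} / (1+t²) = 1/(1+t²) - ∫₀^c s e^{-(1+t²)s²/2} ds`.
Integrating over `t > 0` and exchanging the order of integration, the inner `t`-integral is a
half Gaussian integral equal to `√(π/2) e^{-s²/2}`, so
`∫₀^∞ e^{-c²(1+t²)/2} / (1+t²) dt = π/2 - √(π/2) ∫₀^c e^{-s²/2} ds = π (1 - Φ(c))`.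
As `T(h, ·)` only depends on `h² = |h|²`, letting `a → ∞` gives the claim with `c = |h|`. -/

theorem integral_mul_exp_neg_mul_sq_div_two {k : ℝ} (hk : k ≠ 0) (c : ℝ) :
    ∫ s in (0:ℝ)..c, s * exp (-(k * s ^ 2) / 2) = (1 - exp (-(k * c ^ 2) / 2)) / k := by
  have hderiv (s : ℝ) :
      HasDerivAt (fun s => -exp (-(k * s ^ 2) / 2) / k) (s * exp (-(k * s ^ 2) / 2)) s := by
    refine ((((hasDerivAt_pow 2 s).const_mul k).neg.div_const 2).exp.neg.div_const k).congr_deriv ?_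
    simp only [Pi.neg_apply]
    field_simp
    ring_nf
  rw [intervalIntegral.integral_eq_sub_of_hasDerivAt (fun s _ => hderiv s)
    ((by fun_prop : Continuous fun s => s * exp (-(k * s ^ 2) / 2)).intervalIntegrable _ _)]
  simp only [ne_eq, OfNat.ofNat_ne_zero, not_false_eq_true, zero_pow, mul_zero, neg_zero,
    zero_div, exp_zero]
  ring

theorem mul_exp_neg_one_add_sq_mul_sq_div_two (s t : ℝ) :
    s * exp (-((1 + t ^ 2) * s ^ 2) / 2) = s * exp (-s ^ 2 / 2) * exp (-(s ^ 2 / 2) * t ^ 2) := by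
  rw [mul_assoc, ← exp_add]
  ring_nf

theorem integrable_mul_exp_neg_one_add_sq_mul_sq_div_two {s : ℝ} (hs : s ≠ 0) :
    Integrable fun t : ℝ => s * exp (-((1 + t ^ 2) * s ^ 2) / 2) := by
  simp_rw [mul_exp_neg_one_add_sq_mul_sq_div_two s]
  exact (integrable_exp_neg_mul_sq (by positivity)).const_mul _

theorem integral_Ioi_mul_exp_neg_one_add_sq_mul_sq_div_two {s : ℝ} (hs : 0 < s) :
    ∫ t in Set.Ioi 0, s * exp (-((1 + t ^ 2) * s ^ 2) / 2) = √(π / 2) * exp (-s ^ 2 / 2) := by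
  simp_rw [mul_exp_neg_one_add_sq_mul_sq_div_two s]
  rw [integral_const_mul, integral_gaussian_Ioi,
    show π / (s ^ 2 / 2) = π / 2 * (2 / s) ^ 2 by field_simp,
    sqrt_mul (by positivity), sqrt_sq (by positivity)]
  field_simp

theorem integrable_prod_mul_exp_neg_one_add_sq_mul_sq_div_two (c : ℝ) :
    Integrable (Function.uncurry fun t s : ℝ => s * exp (-((1 + t ^ 2) * s ^ 2) / 2))
      ((volume.restrict (Set.Ioi 0)).prod (volume.restrict (Set.Ioc 0 c))) := by
  refine (integrable_prod_iff' (by fun_prop)).mpr ⟨?_, ?_⟩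
  · filter_upwards [ae_restrict_mem measurableSet_Ioc] with s hs
    exact (integrable_mul_exp_neg_one_add_sq_mul_sq_div_two hs.1.ne').integrableOn
  · refine ((by fun_prop : Continuous fun s : ℝ => √(π / 2) * exp (-s ^ 2 / 2))
      |>.integrableOn_Ioc).congr ?_
    filter_upwards [ae_restrict_mem measurableSet_Ioc] with s ⟨hs, _⟩
    have hnorm (t : ℝ) : ‖s * exp (-((1 + t ^ 2) * s ^ 2) / 2)‖
        = s * exp (-((1 + t ^ 2) * s ^ 2) / 2) := norm_of_nonneg (by positivity)
    simp only [Function.uncurry_apply_pair, hnorm,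
      integral_Ioi_mul_exp_neg_one_add_sq_mul_sq_div_two hs]

theorem integrable_exp_neg_sq_mul_one_add_sq_div_one_add_sq (c : ℝ) :
    Integrable fun t : ℝ => exp (-c ^ 2 * (1 + t ^ 2) / 2) / (1 + t ^ 2) := by
  refine integrable_inv_one_add_sq.mono'
    (Continuous.div (by fun_prop) (by fun_prop) fun t => by positivity).aestronglyMeasurable
    (ae_of_all _ fun t => ?_)
  have hexp : exp (-c ^ 2 * (1 + t ^ 2) / 2) ≤ 1 := exp_le_one_iff.mpr (by nlinarith)
  rw [norm_of_nonneg (by positivity), div_eq_mul_inv]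
  exact mul_le_of_le_one_left (by positivity) hexp

theorem integral_Ioi_exp_neg_sq_mul_one_add_sq_div_one_add_sq {c : ℝ} (hc : 0 ≤ c) :
    ∫ t in Set.Ioi 0, exp (-c ^ 2 * (1 + t ^ 2) / 2) / (1 + t ^ 2)
      = π / 2 - √(π / 2) * ∫ s in (0:ℝ)..c, exp (-s ^ 2 / 2) := by
  set F : ℝ → ℝ → ℝ := fun t s => s * exp (-((1 + t ^ 2) * s ^ 2) / 2)
  have hF := integrable_prod_mul_exp_neg_one_add_sq_mul_sq_div_two c
  have hF_left : IntegrableOn (fun t => ∫ s in Set.Ioc 0 c, F t s) (Set.Ioi 0) :=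
    hF.integral_prod_left
  have hsplit (t : ℝ) : exp (-c ^ 2 * (1 + t ^ 2) / 2) / (1 + t ^ 2)
      = (1 + t ^ 2)⁻¹ - ∫ s in Set.Ioc 0 c, F t s := by
    rw [← intervalIntegral.integral_of_le hc,
      integral_mul_exp_neg_mul_sq_div_two (by positivity)]
    field_simp
    ring_nf
  simp_rw [hsplit]
  rw [integral_sub integrable_inv_one_add_sq.integrableOn hF_left, integral_Ioi_inv_one_add_sq,
    arctan_zero, sub_zero, integral_integral_swap hF,
    setIntegral_congr_fun measurableSet_Ioc
      fun s hs => integral_Ioi_mul_exp_neg_one_add_sq_mul_sq_div_two hs.1,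
    integral_const_mul, intervalIntegral.integral_of_le hc]

theorem integrable_exp_neg_sq_div_two : Integrable fun t : ℝ => exp (-t ^ 2 / 2) := by
  simpa [neg_div, div_eq_inv_mul] using integrable_exp_neg_mul_sq (b := 1 / 2) (by norm_num)

theorem integral_Iic_zero_exp_neg_sq_div_two :
    ∫ t in Set.Iic 0, exp (-t ^ 2 / 2) = √(2 * π) / 2 := by
  have htotal : ∫ t, exp (-t ^ 2 / 2) = √(2 * π) := by
    simpa [neg_div, div_eq_inv_mul] using integral_gaussian (1 / 2)
  have hsymm : ∫ t in Set.Ioi 0, exp (-t ^ 2 / 2) = ∫ t in Set.Iic 0, exp (-t ^ 2 / 2) := by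
    have := integral_comp_neg_Ioi (0 : ℝ) fun t => exp (-t ^ 2 / 2)
    simp only [neg_sq, neg_zero] at this
    exact this
  have := intervalIntegral.integral_Iic_add_Ioi (b := 0)
    integrable_exp_neg_sq_div_two.integrableOn integrable_exp_neg_sq_div_two.integrableOn
  linarith

theorem Phi_eq (x : ℝ) : Phi x = 1 / 2 + (√(2 * π))⁻¹ * ∫ s in (0:ℝ)..x, exp (-s ^ 2 / 2) := by
  rw [Phi, integral_const_mul, ← intervalIntegral.integral_Iic_sub_Iic
    integrable_exp_neg_sq_div_two.integrableOn integrable_exp_neg_sq_div_two.integrableOn,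
    integral_Iic_zero_exp_neg_sq_div_two]
  field_simp
  ring

theorem integral_Ioi_exp_neg_sq_mul_one_add_sq_div_one_add_sq_eq_pi_mul {c : ℝ} (hc : 0 ≤ c) :
    ∫ t in Set.Ioi 0, exp (-c ^ 2 * (1 + t ^ 2) / 2) / (1 + t ^ 2) = π * (1 - Phi c) := by
  have hsqrt : √(π / 2) = π * (√(2 * π))⁻¹ := by
    rw [← div_eq_mul_inv, eq_div_iff (by positivity), ← sqrt_mul (by positivity),
      show π / 2 * (2 * π) = π ^ 2 by ring, sqrt_sq pi_pos.le]
  rw [integral_Ioi_exp_neg_sq_mul_one_add_sq_div_one_add_sq hc, Phi_eq, hsqrt]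
  ring

/-- `lim_{a→∞} T(h, a) = (1 - Φ(|h|))/2`. -/
theorem stmt_5 (h : ℝ) :
    Tendsto (fun a : ℝ => OwenT h a) atTop (nhds ((1 - Phi |h|) / 2)) := by
  have hlim := (intervalIntegral_tendsto_integral_Ioi 0
    (integrable_exp_neg_sq_mul_one_add_sq_div_one_add_sq |h|).integrableOn tendsto_id).const_mul
    (1 / (2 * π))
  rw [integral_Ioi_exp_neg_sq_mul_one_add_sq_div_one_add_sq_eq_pi_mul (abs_nonneg h), sq_abs,
    show 1 / (2 * π) * (π * (1 - Phi |h|)) = (1 - Phi |h|) / 2 by field_simp] at hlim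
  exact hlim
end

section
/- Fix constants d₃ > L_tr > 0 and consider F(d₁) = (d₃² - L_tr²)/(4 d₁³ (d₃ - d₁)³) on the interval [ (d₃ - L_tr)/2, (d₃ + L_tr)/2 ]. Then F has a unique interior critical point at d₁ = d₃/2, which is a strict minimum, and F attains its maximum on the interval exactly at the two endpoints d₁ = (d₃ ± L_tr)/2, where it takes equal values. -/
open Real Set

/-!
With `u d = d * (d₃ - d) = (d₃ / 2) ^ 2 - (d - d₃ / 2) ^ 2` we have
`F d = (d₃ ^ 2 - L_tr ^ 2) / (4 * (u d) ^ 3)`, a strictly decreasing function of `u d > 0`,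
while `u d` strictly decreases in `|d - d₃ / 2|`. So `F` is ordered like the distance to the
midpoint: smallest at `d₃ / 2`, largest at the two endpoints, which are equidistant from it.
The derivative is a nonzero multiple of `d₃ - 2 * d`.
-/

section
variable {a L d e : ℝ}

lemma mul_sub_eq_sq_sub_sq (a d : ℝ) : d * (a - d) = (a / 2) ^ 2 - (d - a / 2) ^ 2 := by ring

lemma mul_sub_lt_mul_sub_iff : e * (a - e) < d * (a - d) ↔ |d - a / 2| < |e - a / 2| := by
  rw [mul_sub_eq_sq_sub_sq, mul_sub_eq_sq_sub_sq, sub_lt_sub_iff_left, sq_lt_sq]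

lemma mul_sub_le_mul_sub_iff : e * (a - e) ≤ d * (a - d) ↔ |d - a / 2| ≤ |e - a / 2| := by
  rw [mul_sub_eq_sq_sub_sq, mul_sub_eq_sq_sub_sq, sub_le_sub_iff_left, sq_le_sq]

lemma abs_sub_half_le_of_mem_Icc (hd : d ∈ Icc ((a - L) / 2) ((a + L) / 2)) :
    |d - a / 2| ≤ L / 2 :=
  abs_le.2 ⟨by linarith [hd.1], by linarith [hd.2]⟩

lemma abs_sub_half_lt_of_mem_Ioo (hd : d ∈ Ioo ((a - L) / 2) ((a + L) / 2)) :
    |d - a / 2| < L / 2 :=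
  abs_lt.2 ⟨by linarith [hd.1], by linarith [hd.2]⟩

end

lemma strictAntiOn_div_four_mul_cube {C : ℝ} (hC : 0 < C) :
    StrictAntiOn (fun t : ℝ => C / (4 * t ^ 3)) (Ioi 0) := fun s (hs : 0 < s) _ _ hst =>
  div_lt_div_of_pos_left hC (by positivity) (by gcongr)

lemma hasDerivAt_div_four_mul_cube_mul_sub (C a x : ℝ) (hx : x * (a - x) ≠ 0) :
    HasDerivAt (fun d => C / (4 * d ^ 3 * (a - d) ^ 3))
      (-C * (12 * (x * (a - x)) ^ 2 * (a - 2 * x)) / (4 * (x * (a - x)) ^ 3) ^ 2) x := by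
  have hu : HasDerivAt (fun d => d * (a - d)) (a - 2 * x) x :=
    ((hasDerivAt_id' x).mul ((hasDerivAt_id' x).const_sub a)).congr_deriv (by ring)
  have hF : (fun d => C / (4 * d ^ 3 * (a - d) ^ 3)) = fun d => C / (4 * (d * (a - d)) ^ 3) := by
    funext d; ring
  rw [hF]
  exact ((hasDerivAt_const x C).fun_div ((hu.fun_pow 3).const_mul 4) (by positivity)).congr_deriv
    (by push_cast; ring)

lemma deriv_div_four_mul_cube_mul_sub_eq_zero_iff {C a x : ℝ} (hC : C ≠ 0)
    (hx : x * (a - x) ≠ 0) :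
    deriv (fun d => C / (4 * d ^ 3 * (a - d) ^ 3)) x = 0 ↔ x = a / 2 := by
  rw [(hasDerivAt_div_four_mul_cube_mul_sub C a x hx).deriv]
  simp [hC, hx, sub_eq_zero, eq_div_iff, eq_comm (a := a), mul_comm]

/-- For `d₃ > L_tr > 0` and `F(d₁) = (d₃² - L_tr²)/(4 d₁³ (d₃-d₁)³)` on
`[(d₃-L_tr)/2, (d₃+L_tr)/2]`: the unique interior critical point is `d₁ = d₃/2`,
it is a strict minimum, and `F` attains its maximum exactly at the two endpoints,
where it takes equal values. -/
theorem stmt_10 (d₃ Ltr : ℝ) (hL : 0 < Ltr) (hd : Ltr < d₃) :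
    let F : ℝ → ℝ := fun d => (d₃^2 - Ltr^2) / (4 * d^3 * (d₃ - d)^3)
    let lo : ℝ := (d₃ - Ltr) / 2
    let hi : ℝ := (d₃ + Ltr) / 2
    (∀ d ∈ Ioo lo hi, deriv F d = 0 ↔ d = d₃/2) ∧
    (∀ d ∈ Icc lo hi, d ≠ d₃/2 → F (d₃/2) < F d) ∧
    F lo = F hi ∧
    (∀ d ∈ Icc lo hi, F d ≤ F lo) ∧
    (∀ d ∈ Ioo lo hi, F d < F lo) := by
  intro F lo hi
  set u : ℝ → ℝ := fun d => d * (d₃ - d)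
  have hC : 0 < d₃ ^ 2 - Ltr ^ 2 := by nlinarith
  have hF : ∀ d, F d = (d₃ ^ 2 - Ltr ^ 2) / (4 * u d ^ 3) := fun d => by simp only [F, u]; ring
  have hlo : |lo - d₃ / 2| = Ltr / 2 := by
    rw [show lo - d₃ / 2 = -(Ltr / 2) by simp only [lo]; ring, abs_neg, abs_of_pos (by positivity)]
  have hu_lo : 0 < u lo := by simp only [u, lo]; nlinarith
  have hu_le : ∀ d ∈ Icc lo hi, u lo ≤ u d := fun d hd =>
    mul_sub_le_mul_sub_iff.2 (hlo ▸ abs_sub_half_le_of_mem_Icc hd)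
  have hu_pos : ∀ d ∈ Icc lo hi, 0 < u d := fun d hd => hu_lo.trans_le (hu_le d hd)
  have hanti := strictAntiOn_div_four_mul_cube hC
  refine ⟨fun d hd => deriv_div_four_mul_cube_mul_sub_eq_zero_iff hC.ne'
      (hu_pos d (Ioo_subset_Icc_self hd)).ne', fun d hd hne => ?_, ?_, fun d hd => ?_,
      fun d hd => ?_⟩
  · have hlt : u d < u (d₃ / 2) := mul_sub_lt_mul_sub_iff.2 (by
      rwa [sub_self, abs_zero, abs_pos, sub_ne_zero])
    rw [hF, hF]
    exact hanti (hu_pos d hd) ((hu_pos d hd).trans hlt) hlt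
  · simp only [F, lo, hi]
    ring
  · rw [hF, hF]
    exact hanti.antitoneOn hu_lo (hu_pos d hd) (hu_le d hd)
  · rw [hF, hF]
    exact hanti hu_lo (hu_pos d (Ioo_subset_Icc_self hd))
      (mul_sub_lt_mul_sub_iff.2 (hlo ▸ abs_sub_half_lt_of_mem_Ioo hd))
end

section
/- Fix constants d₃ > L_tr > 0 and consider G(d₁) = (d₃² - L_tr²)/(2 d₁² (d₃ - d₁)) on the interval [ (d₃ - L_tr)/2, (d₃ + L_tr)/2 ]. If L_tr < d₃/3, then G attains its maximum on this interval uniquely at d₁ = (d₃ - L_tr)/2. -/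
open Real Set

/-- For `d₃ > L_tr > 0` with `L_tr < d₃/3` and
`G(d₁) = (d₃² - L_tr²)/(2 d₁² (d₃-d₁))` on `[(d₃-L_tr)/2, (d₃+L_tr)/2]`,
`G` attains its maximum on the interval uniquely at the left endpoint
`d₁ = (d₃ - L_tr)/2`. -/
theorem stmt_11 (d₃ Ltr : ℝ) (hL : 0 < Ltr) (hd : Ltr < d₃) (h3 : Ltr < d₃ / 3) :
    let G : ℝ → ℝ := fun d => (d₃^2 - Ltr^2) / (2 * d^2 * (d₃ - d))
    let lo : ℝ := (d₃ - Ltr) / 2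
    let hi : ℝ := (d₃ + Ltr) / 2
    ∀ d ∈ Icc lo hi, d ≠ lo → G d < G lo := by
  intro G lo hi d hd1 hne
  obtain ⟨hdlo, hdhi⟩ := hd1
  have hlt : lo < d := lt_of_le_of_ne hdlo (Ne.symm hne)
  have hlo : (0:ℝ) < lo := by simp only [lo]; linarith
  have hd0 : 0 < d := lt_trans hlo hlt
  have hdh : d < 2 * d₃ / 3 := by
    have : hi < 2 * d₃ / 3 := by simp only [hi]; linarith
    linarith
  have hC : 0 < d₃ ^ 2 - Ltr ^ 2 := by nlinarith
  have hden1 : 0 < 2 * lo ^ 2 * (d₃ - lo) := by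
    have h : lo < d₃ := by simp only [lo]; linarith
    have := mul_pos (mul_pos two_pos (pow_pos hlo 2)) (sub_pos.mpr h)
    linarith
  have hden2 : 0 < 2 * d ^ 2 * (d₃ - d) := by
    have h : d < d₃ := by linarith
    have := mul_pos (mul_pos two_pos (pow_pos hd0 2)) (sub_pos.mpr h)
    linarith
  have key : 2 * lo ^ 2 * (d₃ - lo) < 2 * d ^ 2 * (d₃ - d) := by
    nlinarith [mul_pos (sub_pos.mpr hlt) (mul_pos hlo hd0),
      mul_pos (mul_pos (sub_pos.mpr hlt) hd0) (by linarith : (0:ℝ) < 2 * d₃ / 3 - d),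
      mul_pos (mul_pos (sub_pos.mpr hlt) hlo) (by linarith : (0:ℝ) < 2 * d₃ / 3 - d),
      sq_nonneg (d - lo), mul_pos (sub_pos.mpr hlt) (sub_pos.mpr hlt)]
  exact div_lt_div_of_pos_left hC hden1 key
end
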